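/- arXiv:0912.3820 — 2 statements merged into one kernel-verified Lean document; each statement's English description precedes it below -/
import Mathlib

section
/- For the type C map Φ: if (α,β) ∈ Λ²_{C_n}, (α̃,β̃) = Φ(α,β), and (α̃',β̃') ∈ Λ¹_{C_n} = {(α,β) : α_{i+1} − 1 ≤ β_i ≤ α_i + 1} satisfies (α,β) ≤ (α̃',β̃'), then (α̃,β̃) ≤ (α̃',β̃'). -/
open Finset

/-- Partial sum `∑_{j=1}^i f j` (one-indexed). -/
def psum (f : ℕ → ℕ) (i : ℕ) : ℕ := ∑ j ∈ Finset.Icc 1 i, f j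

/-- Conjugate partition: `conj f j = #{k ≥ 1 : f k ≥ j}`. -/
noncomputable def conj (f : ℕ → ℕ) (j : ℕ) : ℕ := Set.ncard {k : ℕ | 1 ≤ k ∧ j ≤ f k}

/-- `f` is a partition of `n` (one-indexed, weakly decreasing, eventually zero). -/
def IsPartitionOf (f : ℕ → ℕ) (n : ℕ) : Prop :=
  (∀ i, 1 ≤ i → f (i + 1) ≤ f i) ∧ ∃ N, (∀ i, N < i → f i = 0) ∧ psum f N = n

/-- Weakly decreasing (from index 1 on). -/
def Decr (f : ℕ → ℕ) : Prop := ∀ i, 1 ≤ i → f (i + 1) ≤ f i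

/-- `A_i = ∑_{j ≤ i} (α_j + β_j)`. -/
def AA (f g : ℕ → ℕ) (i : ℕ) : ℕ := ∑ j ∈ Finset.Icc 1 i, (f j + g j)

/-- `B_i = ∑_{j < i} (α_j + β_j) + α_i`. -/
def BB (f g : ℕ → ℕ) (i : ℕ) : ℕ := (∑ j ∈ Finset.Icc 1 (i - 1), (f j + g j)) + f i

/-- Multiplicity of `i` as a part. -/
noncomputable def mult (f : ℕ → ℕ) (i : ℕ) : ℕ := conj f i - conj f (i + 1)


lemma AA_succ (f g : ℕ → ℕ) (i : ℕ) : AA f g (i + 1) = AA f g i + (f (i + 1) + g (i + 1)) :=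
  Finset.sum_Icc_succ_top (Nat.le_add_left 1 i) _

lemma BB_succ (f g : ℕ → ℕ) (i : ℕ) : BB f g (i + 1) = AA f g i + f (i + 1) := by
  simp [BB, AA]

lemma BB_one (f g : ℕ → ℕ) : BB f g 1 = f 1 := by
  simp [BB]

lemma AA_one (f g : ℕ → ℕ) : AA f g 1 = f 1 + g 1 := by
  simp [AA]

/-- `Φ(α,β)` is minimal in `Λ¹_{C_n}` above `(α,β)`. -/
theorem stmt17 (α β α' β' α'' β'' : ℕ → ℕ)
    (hα : Decr α) (hβ : Decr β)
    (hL2 : ∀ i, 1 ≤ i → α (i + 1) ≤ β i + 2 ∧ β i ≤ α i + 2)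
    (ha1 : α' 1 = if α 1 + 1 < β 1 then (α 1 + β 1) / 2 else α 1)
    (hb1 : β' 1 = if α 1 + 1 < β 1 then (α 1 + β 1 + 1) / 2 else
      if β 1 + 1 < α 2 then (α 2 + β 1) / 2 else β 1)
    (ha : ∀ i, 2 ≤ i → α' i = if α i + 1 < β i then (α i + β i) / 2 else
      if β (i - 1) + 1 < α i then (α i + β (i - 1) + 1) / 2 else α i)
    (hb : ∀ i, 2 ≤ i → β' i = if α i + 1 < β i then (α i + β i + 1) / 2 else
      if β i + 1 < α (i + 1) then (α (i + 1) + β i) / 2 else β i)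
    (hα'' : Decr α'') (hβ'' : Decr β'')
    (hL1 : ∀ i, 1 ≤ i → α'' (i + 1) ≤ β'' i + 1 ∧ β'' i ≤ α'' i + 1)
    (hord : ∀ i, 1 ≤ i → AA α β i ≤ AA α'' β'' i ∧ BB α β i ≤ BB α'' β'' i) :
    ∀ i, 1 ≤ i → AA α' β' i ≤ AA α'' β'' i ∧ BB α' β' i ≤ BB α'' β'' i := by
  
  -- Pointwise descriptions of Φ on Λ².
  have pA1 : α' 1 = α 1 + (if α 1 + 1 < β 1 then 1 else 0) := by
    have h2 := hL2 1 le_rfl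
    rw [ha1]; split_ifs <;> omega
  have pA : ∀ i, 1 ≤ i →
      α' (i + 1) + (if β i + 1 < α (i + 1) then 1 else 0)
        = α (i + 1) + (if α (i + 1) + 1 < β (i + 1) then 1 else 0) := by
    intro i hi
    have h2 := hL2 i hi
    have h3 := hL2 (i + 1) (by omega)
    have h4 := hβ i hi
    have h5 := ha (i + 1) (by omega)
    simp only [Nat.add_sub_cancel] at h5
    rw [h5]; split_ifs <;> omega
  have pB : ∀ i, 1 ≤ i →
      β' i + (if α i + 1 < β i then 1 else 0)
        = β i + (if β i + 1 < α (i + 1) then 1 else 0) := by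
    intro i hi
    have h2 := hL2 i hi
    have h4 := hα i hi
    rcases eq_or_lt_of_le hi with h1 | h1
    · rw [← h1] at h2 h4 ⊢
      have h6 : α (1 + 1) = α 2 := rfl
      rw [hb1, h6]; split_ifs <;> omega
    · rw [hb i h1]; split_ifs <;> omega
  -- A'_i = A_i + e_i
  have kA : ∀ i, 1 ≤ i →
      AA α' β' i = AA α β i + (if β i + 1 < α (i + 1) then 1 else 0) := by
    intro i hi
    induction i, hi using Nat.le_induction with
    | base =>
      have h1 := pA1
      have h2 := pB 1 le_rfl
      rw [AA_one, AA_one]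
      split_ifs at * <;> omega
    | succ n hn ih =>
      have h1 := pA n hn
      have h2 := pB (n + 1) (by omega)
      rw [AA_succ, AA_succ, ih]
      split_ifs at * <;> omega
  -- B'_i = B_i + f_i
  have kB : ∀ i, 1 ≤ i →
      BB α' β' i = BB α β i + (if α i + 1 < β i then 1 else 0) := by
    intro i hi
    rcases eq_or_lt_of_le hi with h1 | h1
    · rw [← h1, BB_one, BB_one, pA1]
    · obtain ⟨k, rfl⟩ : ∃ k, i = k + 1 := ⟨i - 1, by omega⟩
      have hk : 1 ≤ k := by omega
      have h2 := kA k hk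
      have h3 := pA k hk
      rw [BB_succ, BB_succ, h2]
      split_ifs at * <;> omega
  intro i hi
  obtain ⟨k, rfl⟩ : ∃ k, i = k + 1 := ⟨i - 1, by omega⟩
  have e1 : AA α β (k + 1) = BB α β (k + 1) + β (k + 1) := by
    rw [AA_succ, BB_succ]; omega
  have e1'' : AA α'' β'' (k + 1) = BB α'' β'' (k + 1) + β'' (k + 1) := by
    rw [AA_succ, BB_succ]; omega
  constructor
  · rw [kA (k + 1) hi]
    by_cases hc : β (k + 1) + 1 < α (k + 1 + 1)
    · simp only [hc, if_true]
      by_contra hcon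
      have h0 := (hord (k + 1) hi).1
      have h0' := (hord (k + 1) hi).2
      have h1 := (hord (k + 2) (by omega)).2
      have h2 : BB α β (k + 2) = AA α β (k + 1) + α (k + 2) := BB_succ _ _ _
      have h2' : BB α'' β'' (k + 2) = AA α'' β'' (k + 1) + α'' (k + 2) := BB_succ _ _ _
      have h3 := (hL1 (k + 1) hi).1
      simp only [show k + 1 + 1 = k + 2 from rfl] at *
      omega
    · simp only [hc, if_false]
      simpa using (hord (k + 1) hi).1
  · rw [kB (k + 1) hi]
    by_cases hc : α (k + 1) + 1 < β (k + 1)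
    · simp only [hc, if_true]
      by_contra hcon
      have h0 := (hord (k + 1) hi).1
      have h0' := (hord (k + 1) hi).2
      have h3 := (hL1 (k + 1) hi).2
      rcases Nat.eq_zero_or_pos k with rfl | hk
      · have b1 := BB_one α β
        have b1' := BB_one α'' β''
        simp only [Nat.zero_add] at *
        omega
      · have h2 : BB α β (k + 1) = AA α β k + α (k + 1) := BB_succ _ _ _
        have h2' : BB α'' β'' (k + 1) = AA α'' β'' k + α'' (k + 1) := BB_succ _ _ _
        have h4 := (hord k hk).1
        omega
    · simp only [hc, if_false, Nat.add_zero]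
      exact (hord (k + 1) hi).2
end

section
/- Let λ be a partition of 2n all of whose odd parts occur with even multiplicity (i.e., m_λ(i) is even whenever i is odd), together with a function ε on part sizes as in Spaltenstein's parametrization of unipotent classes of Sp(2n) in characteristic 2. Suppose (μ,φ) is another such pair with (λ,ε) ≤ (μ,φ) in Spaltenstein's order. If λ*_{k+1} = m, ε(λ_{m+1}) = 1 (where λ_{m+1} = k), and ∑_{j=1}^k λ*_j = ∑_{j=1}^k μ*_j, then ∑_{j=1}^m λ_j = ∑_{j=1}^m μ_j and μ_{m+1} = k. -/
/-!
Since `ε k = 1`, `k` is even, so `ε` and `φ` are `ω` at the odd indices `k ∓ 1`, where condition (b)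
simply compares conjugate partial sums. Together with equality at `k` this squeezes
`μ*_k ≥ λ*_k > m ≥ λ*_{k+1} ≥ μ*_{k+1}`, i.e. `μ_{m+1} = k`. For a partition `f` with
`f_{m+1} = k ≥ 1` one has `∑_{j ≤ k} f*_j + ∑_{j ≤ m} f_j = m k + |f|`, which turns the equality at
`k` into equality of the first `m` partial sums.
-/

open Finset

lemma Decr.antitoneOn {f : ℕ → ℕ} (hf : Decr f) : AntitoneOn f (Set.Ici 1) :=
  antitoneOn_nat_Ici_of_succ_le hf

lemma Decr.le_of_le {f : ℕ → ℕ} (hf : Decr f) {i j : ℕ} (hi : 1 ≤ i) (hij : i ≤ j) :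
    f j ≤ f i :=
  hf.antitoneOn hi (le_trans hi hij : 1 ≤ j) hij

lemma psum_succ (f : ℕ → ℕ) (i : ℕ) : psum f (i + 1) = psum f i + f (i + 1) :=
  Finset.sum_Icc_succ_top (by omega) f

lemma psum_add_sum_Ioc (f : ℕ → ℕ) {m N : ℕ} (hmN : m ≤ N) :
    psum f m + ∑ j ∈ Ioc m N, f j = psum f N := by
  have hIcc : ∀ i, Icc 1 i = Ioc 0 i := fun i => Icc_add_one_left_eq_Ioc 0 i
  simp only [psum, hIcc]
  exact sum_Ioc_consecutive f (Nat.zero_le m) hmN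

section Conjugate

variable {f : ℕ → ℕ} {N : ℕ}

lemma conj_eq_card_filter (hN : ∀ i, N < i → f i = 0) {j : ℕ} (hj : 1 ≤ j) :
    conj f j = #{k ∈ Icc 1 N | j ≤ f k} := by
  rw [conj, ← Set.ncard_coe_finset]
  congr 1
  ext k
  simp only [Set.mem_ofPred_eq, coe_filter, mem_Icc]
  constructor
  · rintro ⟨hk, hjk⟩
    refine ⟨⟨hk, ?_⟩, hjk⟩
    by_contra hkN
    have := hN k (by omega)
    omega
  · tauto

lemma psum_conj (hN : ∀ i, N < i → f i = 0) (K : ℕ) :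
    psum (conj f) K = ∑ j ∈ Icc 1 N, min (f j) K := by
  have hconj : ∀ i ∈ Icc 1 K, conj f i = ∑ j ∈ Icc 1 N, if i ≤ f j then 1 else 0 := by
    intro i hi
    rw [conj_eq_card_filter hN (mem_Icc.mp hi).1, card_filter]
  rw [psum, sum_congr rfl hconj, sum_comm]
  refine sum_congr rfl fun j _ => ?_
  rw [← card_filter, show {i ∈ Icc 1 K | i ≤ f j} = Icc 1 (min (f j) K) by ext; simp; omega,
    Nat.card_Icc, Nat.add_sub_cancel]

lemma le_conj_iff (hf : Decr f) (hN : ∀ i, N < i → f i = 0) {k t : ℕ} (hk : 1 ≤ k)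
    (ht : 1 ≤ t) : t ≤ conj f k ↔ k ≤ f t := by
  rw [conj_eq_card_filter hN hk]
  constructor
  · intro htc
    by_contra! hft
    have hsub : {j ∈ Icc 1 N | k ≤ f j} ⊆ Icc 1 (t - 1) := by
      intro j hj
      simp only [mem_filter, mem_Icc] at hj ⊢
      refine ⟨hj.1.1, ?_⟩
      by_contra! htj
      have := hf.le_of_le ht (show t ≤ j by omega)
      omega
    have := card_le_card hsub
    rw [Nat.card_Icc] at this
    omega
  · intro hkt
    have hsub : Icc 1 t ⊆ {j ∈ Icc 1 N | k ≤ f j} := by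
      intro j hj
      simp only [mem_filter, mem_Icc] at hj ⊢
      have hkj : k ≤ f j := hkt.trans (hf.le_of_le hj.1 hj.2)
      refine ⟨⟨hj.1, ?_⟩, hkj⟩
      by_contra hjN
      have := hN j (by omega)
      omega
    have := card_le_card hsub
    rw [Nat.card_Icc] at this
    omega

end Conjugate

lemma psum_conj_add_psum {f : ℕ → ℕ} {N m k : ℕ} (hf : Decr f) (hN : ∀ i, N < i → f i = 0)
    (hmk : f (m + 1) = k) (hk : 1 ≤ k) :
    psum (conj f) k + psum f m = m * k + psum f N := by
  have hmN : m ≤ N := by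
    by_contra! hNm
    have := hN (m + 1) (by omega)
    omega
  have hhead : psum (fun j => min (f j) k) m = m * k := by
    have hconst : ∀ j ∈ Icc 1 m, min (f j) k = k := fun j hj =>
      min_eq_right (hmk ▸ hf.le_of_le (mem_Icc.mp hj).1 (by have := (mem_Icc.mp hj).2; omega))
    rw [psum, sum_congr rfl hconst, sum_const, Nat.card_Icc, smul_eq_mul, Nat.add_sub_cancel]
  have htail : ∑ j ∈ Ioc m N, min (f j) k = ∑ j ∈ Ioc m N, f j := sum_congr rfl fun j hj =>
    min_eq_left (hmk ▸ hf.le_of_le (by omega) (mem_Ioc.mp hj).1)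
  have hsplit := psum_add_sum_Ioc (fun j => min (f j) k) hmN
  rw [psum_conj hN, ← psum, ← hsplit, hhead, htail, ← psum_add_sum_Ioc f hmN]
  ring

lemma apply_succ_eq_of_conj {f : ℕ → ℕ} {N m k : ℕ} (hf : Decr f) (hN : ∀ i, N < i → f i = 0)
    (hk : 1 ≤ k) (hm : m + 1 ≤ conj f k) (hm' : conj f (k + 1) ≤ m) : f (m + 1) = k := by
  have hge : k ≤ f (m + 1) := (le_conj_iff hf hN hk (by omega)).mp hm
  have hlt : ¬ k + 1 ≤ f (m + 1) := fun h =>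
    absurd ((le_conj_iff hf hN (by omega) (by omega)).mpr h) (by omega)
  omega

/-- `ε, φ` take values in `{-1, 0, 1}`, where `-1` stands for `ω` (so `ω < 0 < 1` is the
numeric order). -/
theorem stmt19_general (n : ℕ) (la mu : ℕ → ℕ) (ε φ : ℕ → ℤ)
    (hla : IsPartitionOf la (2 * n)) (hmu : IsPartitionOf mu (2 * n))
    -- ε is an admissible function for λ (Spaltenstein's conditions, Sp case)
    (hεa : ∀ i, 1 ≤ i → (Odd i ∨ mult la i = 0) → ε i = -1)
    -- φ is an admissible function for μ
    (hφa : ∀ i, 1 ≤ i → (Odd i ∨ mult mu i = 0) → φ i = -1)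
    -- Spaltenstein's order (λ,ε) ≤ (μ,φ)
    (hord2 : ∀ i, 1 ≤ i →
      (psum (conj mu) i : ℤ) - max (φ i) 0 ≤ (psum (conj la) i : ℤ) - max (ε i) 0)
    -- the hypotheses of the claim
    (k m : ℕ) (hk : 1 ≤ k)
    (hm : conj la (k + 1) = m) (hlam : la (m + 1) = k) (hε : ε k = 1)
    (heq : psum (conj la) k = psum (conj mu) k) :
    psum la m = psum mu m ∧ mu (m + 1) = k := by
  obtain ⟨hlad, Nl, hNl, hla⟩ := hla
  obtain ⟨hmud, Nm, hNm, hmu⟩ := hmu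
  have hodd : ∀ i, Odd i → psum (conj mu) i ≤ psum (conj la) i := fun i hi => by
    have hi1 : 1 ≤ i := hi.pos
    simpa [hφa i hi1 (.inl hi), hεa i hi1 (.inl hi)] using hord2 i hi1
  obtain ⟨j, rfl⟩ : ∃ j, k = j + 1 := ⟨k - 1, by omega⟩
  have hj : Odd j := by
    by_contra hj
    have := hεa (j + 1) hk (.inl (Nat.not_odd_iff_even.mp hj).add_one)
    omega
  have hconj_k : conj la (j + 1) ≤ conj mu (j + 1) := by
    have := hodd j hj
    rw [psum_succ, psum_succ] at heq
    omega
  have hconj_succ_k : conj mu (j + 1 + 1) ≤ conj la (j + 1 + 1) := by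
    have := hodd (j + 1 + 1) (hj.add_even even_two)
    rw [psum_succ (conj la), psum_succ (conj mu)] at this
    omega
  have hlak : m + 1 ≤ conj la (j + 1) := (le_conj_iff hlad hNl hk (by omega)).mpr hlam.ge
  have hmuk : mu (m + 1) = j + 1 := apply_succ_eq_of_conj hmud hNm hk (by omega) (by omega)
  have hlasum := psum_conj_add_psum hlad hNl hlam hk
  have hmusum := psum_conj_add_psum hmud hNm hmuk hk
  exact ⟨by omega, hmuk⟩

/-- a step in the comparison of Spaltenstein's order with the
order on pairs, for `Sp(2n)` in characteristic 2. Here `ε, φ` take values in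
`{-1, 0, 1}` where `-1` stands for `ω` (so `ω < 0 < 1` is the numeric order). -/
theorem stmt19 (n : ℕ) (la mu : ℕ → ℕ) (ε φ : ℕ → ℤ)
    (hla : IsPartitionOf la (2 * n)) (hmu : IsPartitionOf mu (2 * n))
    (hlaodd : ∀ i, 1 ≤ i → Odd i → Even (mult la i))
    (hmuodd : ∀ i, 1 ≤ i → Odd i → Even (mult mu i))
    -- ε is an admissible function for λ (Spaltenstein's conditions, Sp case)
    (hεr : ∀ i, ε i = -1 ∨ ε i = 0 ∨ ε i = 1) (hε0 : ε 0 = 1)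
    (hεa : ∀ i, 1 ≤ i → (Odd i ∨ mult la i = 0) → ε i = -1)
    (hεb : ∀ i, 1 ≤ i → Even i → Odd (mult la i) → ε i = 1)
    (hεc : ∀ i, 1 ≤ i → Even i → 0 < mult la i → ε i ≠ -1)
    -- φ is an admissible function for μ
    (hφr : ∀ i, φ i = -1 ∨ φ i = 0 ∨ φ i = 1) (hφ0 : φ 0 = 1)
    (hφa : ∀ i, 1 ≤ i → (Odd i ∨ mult mu i = 0) → φ i = -1)
    (hφb : ∀ i, 1 ≤ i → Even i → Odd (mult mu i) → φ i = 1)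
    (hφc : ∀ i, 1 ≤ i → Even i → 0 < mult mu i → φ i ≠ -1)
    -- Spaltenstein's order (λ,ε) ≤ (μ,φ)
    (hord1 : ∀ i, 1 ≤ i → psum la i ≤ psum mu i)
    (hord2 : ∀ i, 1 ≤ i →
      (psum (conj mu) i : ℤ) - max (φ i) 0 ≤ (psum (conj la) i : ℤ) - max (ε i) 0)
    (hord3 : ∀ i, 1 ≤ i → psum (conj la) i = psum (conj mu) i →
      Odd ((conj la (i + 1) : ℤ) - (conj mu (i + 1) : ℤ)) → φ i ≠ 0)
    -- the hypotheses of the claim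
    (k m : ℕ) (hk : 1 ≤ k)
    (hm : conj la (k + 1) = m) (hlam : la (m + 1) = k) (hε : ε k = 1)
    (heq : psum (conj la) k = psum (conj mu) k) :
    psum la m = psum mu m ∧ mu (m + 1) = k :=
  stmt19_general n la mu ε φ hla hmu hεa hφa hord2 k m hk hm hlam hε heq
end
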